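/- arXiv:1004.3826 — 2 statements merged into one kernel-verified Lean document; each statement's English description precedes it below -/
import Mathlib

section
/- Let $K : [0,\infty) \to \mathbb{R}$ be continuous with $K(t) \le 0$ for all $t \ge 0$ and $\int_0^{\infty} t\,K(t)\,dt > -\infty$. Let $m : [0,\infty) \to \mathbb{R}$ solve $m''(t) + K(t) m(t) = 0$ with $m(0) = 0$, $m'(0) = 1$. Then $m'$ is non-decreasing, the limit $\lim_{t \to \infty} m'(t)$ exists, and $1 \le \lim_{t \to \infty} m'(t) \le \exp\left(\int_0^{\infty} (-t\,K(t))\,dt\right) < \infty$. -/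
/-!
While `m'` stays positive, `m` is nondecreasing from `m 0 = 0`, so `m'' = -K m ≥ 0` and `m'` stays
at least `m' 0 = 1`; looking at the first time `m'` could vanish makes this global. Monotonicity of
`m'` gives `m t ≤ t m' t`, hence `(log m')' = -K m / m' ≤ -t K`, and integrating bounds `m'` by
`exp ∫₀^∞ (-t K)`. A bounded monotone function has a limit.
-/

open MeasureTheory Real Filter Topology Set

lemma Convex.monotoneOn_of_hasDerivAt_nonneg {s : Set ℝ} (hs : Convex ℝ s) {f f' : ℝ → ℝ}
    (hf : ∀ x ∈ s, HasDerivAt f (f' x) x) (hf' : ∀ x ∈ interior s, 0 ≤ f' x) :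
    MonotoneOn f s :=
  monotoneOn_of_hasDerivWithinAt_nonneg hs (fun x hx => (hf x hx).continuousAt.continuousWithinAt)
    (fun x hx => (hf x (interior_subset hx)).hasDerivWithinAt) hf'

lemma sub_le_mul_sub_of_hasDerivAt_of_monotoneOn {f f' : ℝ → ℝ} {a b : ℝ} (hab : a ≤ b)
    (hf : ∀ x ∈ Icc a b, HasDerivAt f (f' x) x) (hf' : MonotoneOn f' (Icc a b)) :
    f b - f a ≤ f' b * (b - a) := by
  refine (convex_Icc a b).image_sub_le_mul_sub_of_deriv_le
    (fun x hx => (hf x hx).continuousAt.continuousWithinAt)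
    (fun x hx => (hf x (interior_subset hx)).differentiableAt.differentiableWithinAt)
    (fun x hx => ?_) a (left_mem_Icc.2 hab) b (right_mem_Icc.2 hab) hab
  rw [(hf x (interior_subset hx)).deriv]
  exact hf' (interior_subset hx) (right_mem_Icc.2 hab) (interior_subset hx).2

lemma MonotoneOn.exists_tendsto_atTop_of_le {f : ℝ → ℝ} {a B : ℝ} (hf : MonotoneOn f (Ici a))
    (hB : ∀ t ≥ a, f t ≤ B) : ∃ L, Tendsto f atTop (𝓝 L) := by
  have hmono : Monotone fun t => f (max t a) := fun s t hst =>
    hf (le_max_right s a) (le_max_right t a) (max_le_max_right a hst)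
  have hbdd : BddAbove (range fun t => f (max t a)) := by
    refine ⟨B, ?_⟩
    rintro _ ⟨t, rfl⟩
    exact hB _ (le_max_right t a)
  refine ⟨_, (tendsto_atTop_ciSup hmono hbdd).congr' ?_⟩
  filter_upwards [eventually_ge_atTop a] with t ht
  rw [max_eq_left ht]

lemma intervalIntegral_le_setIntegral_Ici {f : ℝ → ℝ} {a b : ℝ} (hab : a ≤ b)
    (hf : IntegrableOn f (Ici a)) (hf₀ : ∀ x ≥ a, 0 ≤ f x) :
    ∫ x in a..b, f x ≤ ∫ x in Ici a, f x := by
  rw [intervalIntegral.integral_of_le hab]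
  exact setIntegral_mono_set hf ((ae_restrict_iff' measurableSet_Ici).2 (ae_of_all _ hf₀))
    (Ioc_subset_Icc_self.trans Icc_subset_Ici_self).eventuallyLE

section Jacobi

variable {K m : ℝ → ℝ}

lemma jacobi_monotoneOn_deriv_of_deriv_nonneg {s : Set ℝ} (hs : Convex ℝ s) (hs₀ : s ⊆ Ici 0)
    (h₀ : 0 ∈ s) (hm : ∀ t ≥ (0:ℝ), HasDerivAt m (deriv m t) t)
    (hODE : ∀ t ≥ (0:ℝ), HasDerivAt (deriv m) (-(K t * m t)) t) (hK : ∀ t ≥ (0:ℝ), K t ≤ 0)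
    (hm0 : 0 ≤ m 0) (hm' : ∀ t ∈ interior s, 0 ≤ deriv m t) : MonotoneOn (deriv m) s := by
  have hmono : MonotoneOn m s := hs.monotoneOn_of_hasDerivAt_nonneg (fun t ht => hm t (hs₀ ht)) hm'
  refine hs.monotoneOn_of_hasDerivAt_nonneg (fun t ht => hODE t (hs₀ ht)) fun t ht => ?_
  have ht₀ : 0 ≤ t := hs₀ (interior_subset ht)
  have hmt : 0 ≤ m t := hm0.trans (hmono h₀ (interior_subset ht) ht₀)
  exact neg_nonneg.2 (mul_nonpos_of_nonpos_of_nonneg (hK t ht₀) hmt)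

lemma jacobi_deriv_pos (hm : ∀ t ≥ (0:ℝ), HasDerivAt m (deriv m t) t)
    (hODE : ∀ t ≥ (0:ℝ), HasDerivAt (deriv m) (-(K t * m t)) t) (hK : ∀ t ≥ (0:ℝ), K t ≤ 0)
    (hm0 : 0 ≤ m 0) (hm'0 : 0 < deriv m 0) : ∀ t ≥ (0:ℝ), 0 < deriv m t := by
  by_contra! h
  set Z := Ici 0 ∩ deriv m ⁻¹' Iic 0
  have hZ : IsClosed Z := ContinuousOn.preimage_isClosed_of_isClosed
    (fun t ht => (hODE t ht).continuousAt.continuousWithinAt) isClosed_Ici isClosed_Iic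
  have hZbdd : BddBelow Z := ⟨0, fun _ ht => ht.1⟩
  obtain ⟨hc₀, hc⟩ : sInf Z ∈ Z := hZ.csInf_mem h hZbdd
  have hpos : ∀ t ∈ Ico 0 (sInf Z), 0 < deriv m t := fun t ht =>
    lt_of_not_ge fun hmt => (csInf_le hZbdd ⟨ht.1, hmt⟩).not_gt ht.2
  have hmono := jacobi_monotoneOn_deriv_of_deriv_nonneg (convex_Icc 0 (sInf Z)) Icc_subset_Ici_self
    (left_mem_Icc.2 hc₀) hm hODE hK hm0 fun t ht => by
      rw [interior_Icc] at ht
      exact (hpos t (Ioo_subset_Ico_self ht)).le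
  exact (hm'0.trans_le (hmono (left_mem_Icc.2 hc₀) (right_mem_Icc.2 hc₀) hc₀)).not_ge hc

lemma jacobi_monotoneOn_deriv (hm : ∀ t ≥ (0:ℝ), HasDerivAt m (deriv m t) t)
    (hODE : ∀ t ≥ (0:ℝ), HasDerivAt (deriv m) (-(K t * m t)) t) (hK : ∀ t ≥ (0:ℝ), K t ≤ 0)
    (hm0 : 0 ≤ m 0) (hm'0 : 0 < deriv m 0) : MonotoneOn (deriv m) (Ici 0) :=
  jacobi_monotoneOn_deriv_of_deriv_nonneg (convex_Ici 0) subset_rfl self_mem_Ici hm hODE hK hm0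
    fun t ht => (jacobi_deriv_pos hm hODE hK hm0 hm'0 t (interior_subset ht)).le

lemma jacobi_le_mul_deriv (hm : ∀ t ≥ (0:ℝ), HasDerivAt m (deriv m t) t)
    (hODE : ∀ t ≥ (0:ℝ), HasDerivAt (deriv m) (-(K t * m t)) t) (hK : ∀ t ≥ (0:ℝ), K t ≤ 0)
    (hm0 : m 0 = 0) (hm'0 : 0 < deriv m 0) {t : ℝ} (ht : 0 ≤ t) : m t ≤ t * deriv m t := by
  have := sub_le_mul_sub_of_hasDerivAt_of_monotoneOn ht (fun x hx => hm x hx.1)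
    ((jacobi_monotoneOn_deriv hm hODE hK hm0.ge hm'0).mono Icc_subset_Ici_self)
  rwa [hm0, sub_zero, sub_zero, mul_comm] at this

lemma jacobi_log_deriv_le (hm : ∀ t ≥ (0:ℝ), HasDerivAt m (deriv m t) t)
    (hODE : ∀ t ≥ (0:ℝ), HasDerivAt (deriv m) (-(K t * m t)) t) (hK : ∀ t ≥ (0:ℝ), K t ≤ 0)
    (hm0 : m 0 = 0) (hm'0 : deriv m 0 = 1) {t : ℝ} (ht : 0 ≤ t)
    (hKint : IntegrableOn (fun s => -s * K s) (Icc 0 t)) :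
    log (deriv m t) ≤ ∫ s in 0..t, -s * K s := by
  have hm'0pos : 0 < deriv m 0 := hm'0 ▸ one_pos
  have hpos := jacobi_deriv_pos hm hODE hK hm0.ge hm'0pos
  have hlog : ∀ s ≥ (0:ℝ), HasDerivAt (fun s => log (deriv m s)) (-(K s * m s) / deriv m s) s :=
    fun s hs => (hODE s hs).log (hpos s hs).ne'
  have hlog_le : ∀ s ≥ (0:ℝ), -(K s * m s) / deriv m s ≤ -s * K s := fun s hs => by
    rw [div_le_iff₀ (hpos s hs)]
    have := mul_le_mul_of_nonneg_left (jacobi_le_mul_deriv hm hODE hK hm0 hm'0pos hs)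
      (neg_nonneg.2 (hK s hs))
    linarith
  have := intervalIntegral.sub_le_integral_of_hasDeriv_right_of_le ht
    (fun s hs => (hlog s hs.1).continuousAt.continuousWithinAt)
    (fun s hs => (hlog s hs.1.le).hasDerivWithinAt) hKint fun s hs => hlog_le s hs.1.le
  rwa [hm'0, log_one, sub_zero] at this

end Jacobi

theorem jacobi_derivative_limit_general (K m : ℝ → ℝ)
    (hKnonpos : ∀ t ≥ (0:ℝ), K t ≤ 0)
    (hKint : IntegrableOn (fun t => t * K t) (Set.Ici 0))
    (hODE : ∀ t ≥ (0:ℝ), HasDerivAt (deriv m) (-(K t * m t)) t)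
    (hm0 : m 0 = 0) (hm'0 : deriv m 0 = 1)
    (hm' : ∀ t ≥ (0:ℝ), HasDerivAt m (deriv m t) t) :
    MonotoneOn (deriv m) (Set.Ici 0) ∧
      ∃ L : ℝ, Tendsto (deriv m) atTop (nhds L) ∧ 1 ≤ L ∧
        L ≤ Real.exp (∫ t in Set.Ici (0:ℝ), -t * K t) := by
  have hm'0pos : 0 < deriv m 0 := hm'0 ▸ one_pos
  have hKint' : IntegrableOn (fun t => -t * K t) (Ici 0) := by
    simpa only [Pi.neg_def, neg_mul] using hKint.neg
  have hmono := jacobi_monotoneOn_deriv hm' hODE hKnonpos hm0.ge hm'0pos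
  have hbound : ∀ t ≥ (0:ℝ), deriv m t ≤ exp (∫ t in Ici (0:ℝ), -t * K t) := fun t ht =>
    calc deriv m t = exp (log (deriv m t)) :=
          (exp_log (jacobi_deriv_pos hm' hODE hKnonpos hm0.ge hm'0pos t ht)).symm
      _ ≤ exp (∫ s in 0..t, -s * K s) := exp_le_exp.2 <| jacobi_log_deriv_le hm' hODE hKnonpos
          hm0 hm'0 ht (hKint'.mono_set Icc_subset_Ici_self)
      _ ≤ exp (∫ t in Ici (0:ℝ), -t * K t) := exp_le_exp.2 <| intervalIntegral_le_setIntegral_Ici ht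
          hKint' fun s hs => mul_nonneg_of_nonpos_of_nonpos (neg_nonpos.2 hs) (hKnonpos s hs)
  obtain ⟨L, hL⟩ := hmono.exists_tendsto_atTop_of_le hbound
  refine ⟨hmono, L, hL, ?_, le_of_tendsto hL (eventually_atTop.2 ⟨0, hbound⟩)⟩
  exact hm'0 ▸ ge_of_tendsto hL (eventually_atTop.2 ⟨0, fun t ht => hmono self_mem_Ici ht ht⟩)

/-- If `K ≤ 0` is continuous on `[0,∞)` with `∫₀^∞ t K(t) dt > -∞`
(i.e. `t ↦ t K(t)` is integrable on `[0,∞)`), and `m` solves the Jacobi equation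
`m'' + K m = 0` with `m(0)=0`, `m'(0)=1`, then `m'` is non-decreasing on `[0,∞)`,
the limit `L = lim_{t→∞} m'(t)` exists, and `1 ≤ L ≤ exp(∫₀^∞ (-t K(t)) dt) < ∞`. -/
theorem jacobi_derivative_limit (K m : ℝ → ℝ)
    (hKcont : ContinuousOn K (Set.Ici 0))
    (hKnonpos : ∀ t ≥ (0:ℝ), K t ≤ 0)
    (hKint : IntegrableOn (fun t => t * K t) (Set.Ici 0))
    (hODE : ∀ t ≥ (0:ℝ), HasDerivAt (deriv m) (-(K t * m t)) t)
    (hm0 : m 0 = 0) (hm'0 : deriv m 0 = 1)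
    (hm' : ∀ t ≥ (0:ℝ), HasDerivAt m (deriv m t) t) :
    MonotoneOn (deriv m) (Set.Ici 0) ∧
      ∃ L : ℝ, Tendsto (deriv m) atTop (nhds L) ∧ 1 ≤ L ∧
        L ≤ Real.exp (∫ t in Set.Ici (0:ℝ), -t * K t) :=
  jacobi_derivative_limit_general K m hKnonpos hKint hODE hm0 hm'0 hm'
end

section
/- Let $K : [0,\infty) \to \mathbb{R}$ be continuous with $K \le 0$ and $\int_0^{\infty} t K(t)\,dt > -\infty$, and let $m$ solve $m'' + K m = 0$, $m(0)=0$, $m'(0)=1$. Then the total curvature of the associated model surface of revolution $M^*$ (with metric $dt^2 + m(t)^2 d\theta^2$) satisfies $c(M^*) = 2\pi \int_0^{\infty} K(t)\, m(t)\,dt = 2\pi(1 - \lim_{t\to\infty} m'(t))$, and in particular $2\pi - c(M^*) = 2\pi \lim_{t\to\infty} m'(t) \le 2\pi \exp\left(\int_0^{\infty}(-t K(t))\,dt\right)$. -/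
/-!
While `m ≥ 0`, the equation `m'' = -K m ≥ 0` makes `m'` nondecreasing; a first-exit argument
turns this into `m' ≥ m'(0) = 1` and `m ≥ 0` on all of `[0, ∞)`. Then `(t m' - m)' = -t K m ≥ 0`
gives `m ≤ t m'`, hence `(log m')' = -K m / m' ≤ -t K`, so `m' ≤ exp ∫₀^∞ (-t K)` is bounded and
converges to some `L`. Finally `∫₀^∞ K m = m'(0) - L = 1 - L`.
-/

open MeasureTheory Real Filter Set Topology

theorem monotoneOn_of_forall_hasDerivAt_nonneg {D : Set ℝ} (hD : Convex ℝ D) {f f' : ℝ → ℝ}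
    (hf : ∀ x ∈ D, HasDerivAt f (f' x) x) (hf' : ∀ x ∈ interior D, 0 ≤ f' x) :
    MonotoneOn f D :=
  monotoneOn_of_hasDerivWithinAt_nonneg hD (fun x hx => (hf x hx).continuousAt.continuousWithinAt)
    (fun x hx => (hf x (interior_subset hx)).hasDerivWithinAt) hf'

theorem MonotoneOn.exists_tendsto_atTop_le {f : ℝ → ℝ} {a B : ℝ} (hf : MonotoneOn f (Ici a))
    (hB : ∀ x ≥ a, f x ≤ B) : ∃ L, Tendsto f atTop (𝓝 L) ∧ L ≤ B := by
  set g := fun x => f (max x a)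
  have hg : Monotone g := fun x y hxy =>
    hf (le_max_right x a) (le_max_right y a) (max_le_max hxy le_rfl)
  have hgB : BddAbove (range g) := ⟨B, by rintro _ ⟨x, rfl⟩; exact hB _ (le_max_right x a)⟩
  have hgf : g =ᶠ[atTop] f := by
    filter_upwards [eventually_ge_atTop a] with x hx
    simp only [g, max_eq_left hx]
  have hlim := (tendsto_atTop_ciSup hg hgB).congr' hgf
  exact ⟨_, hlim, le_of_tendsto hlim (eventually_atTop.2 ⟨a, hB⟩)⟩

structure IsJacobiSolution (K m m' : ℝ → ℝ) : Prop where
  hasDerivAt : ∀ t ≥ (0 : ℝ), HasDerivAt m (m' t) t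
  hasDerivAt' : ∀ t ≥ (0 : ℝ), HasDerivAt m' (-(K t * m t)) t
  apply_zero : m 0 = 0
  apply_zero' : m' 0 = 1

namespace IsJacobiSolution

variable {K m m' : ℝ → ℝ} {t : ℝ}

theorem continuousOn_deriv (h : IsJacobiSolution K m m') : ContinuousOn m' (Ici 0) :=
  fun t ht => (h.hasDerivAt' t ht).continuousAt.continuousWithinAt

theorem monotoneOn_deriv_of_nonneg (h : IsJacobiSolution K m m') (hK : ∀ t ≥ (0 : ℝ), K t ≤ 0)
    {D : Set ℝ} (hD : Convex ℝ D) (hD0 : D ⊆ Ici 0) (hm : ∀ t ∈ D, 0 ≤ m t) :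
    MonotoneOn m' D :=
  monotoneOn_of_forall_hasDerivAt_nonneg hD (fun t ht => h.hasDerivAt' t (hD0 ht))
    fun t ht => neg_nonneg.2 <| mul_nonpos_of_nonpos_of_nonneg (hK t (hD0 (interior_subset ht)))
      (hm t (interior_subset ht))

theorem deriv_pos (h : IsJacobiSolution K m m') (hK : ∀ t ≥ (0 : ℝ), K t ≤ 0) (ht : 0 ≤ t) :
    0 < m' t := by
  by_contra! hneg
  -- `t₁` is the first time at which `m'` stops being positive.
  have hS : IsClosed (Ici 0 ∩ m' ⁻¹' Iic 0) :=
    h.continuousOn_deriv.preimage_isClosed_of_isClosed isClosed_Ici isClosed_Iic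
  obtain ⟨⟨ht₁, hm't₁⟩, hfirst⟩ := hS.isLeast_csInf ⟨t, ht, hneg⟩ ⟨0, fun s hs => hs.1⟩
  set t₁ := sInf (Ici 0 ∩ m' ⁻¹' Iic 0)
  have hpos : ∀ s ∈ Ico 0 t₁, 0 < m' s := fun s hs => by
    by_contra! hs'
    exact (hfirst ⟨hs.1, hs'⟩).not_gt hs.2
  have hm_mono : MonotoneOn m (Icc 0 t₁) :=
    monotoneOn_of_forall_hasDerivAt_nonneg (convex_Icc 0 t₁) (fun s hs => h.hasDerivAt s hs.1)
      (by rw [interior_Icc]; exact fun s hs => (hpos s (Ioo_subset_Ico_self hs)).le)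
  have hm : ∀ s ∈ Icc 0 t₁, 0 ≤ m s := fun s hs => by
    simpa only [h.apply_zero] using hm_mono (left_mem_Icc.2 ht₁) hs hs.1
  have hm'_mono := h.monotoneOn_deriv_of_nonneg hK (convex_Icc 0 t₁) (fun s hs => hs.1) hm
  have h₁ : 1 ≤ m' t₁ := by
    simpa only [h.apply_zero'] using hm'_mono (left_mem_Icc.2 ht₁) (right_mem_Icc.2 ht₁) ht₁
  linarith [show m' t₁ ≤ 0 from hm't₁]

theorem nonneg (h : IsJacobiSolution K m m') (hK : ∀ t ≥ (0 : ℝ), K t ≤ 0) (ht : 0 ≤ t) :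
    0 ≤ m t := by
  have hmono : MonotoneOn m (Ici 0) :=
    monotoneOn_of_forall_hasDerivAt_nonneg (convex_Ici 0) h.hasDerivAt
      fun s hs => (h.deriv_pos hK (interior_subset hs)).le
  simpa only [h.apply_zero] using hmono self_mem_Ici ht ht

theorem monotoneOn_deriv (h : IsJacobiSolution K m m') (hK : ∀ t ≥ (0 : ℝ), K t ≤ 0) :
    MonotoneOn m' (Ici 0) :=
  h.monotoneOn_deriv_of_nonneg hK (convex_Ici 0) subset_rfl fun _ ht => h.nonneg hK ht

theorem le_mul_deriv (h : IsJacobiSolution K m m') (hK : ∀ t ≥ (0 : ℝ), K t ≤ 0) (ht : 0 ≤ t) :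
    m t ≤ t * m' t := by
  have hmono : MonotoneOn (fun s => s * m' s - m s) (Ici 0) :=
    monotoneOn_of_forall_hasDerivAt_nonneg (convex_Ici 0)
      (fun s hs => ((hasDerivAt_id' s).mul (h.hasDerivAt' s hs)).sub (h.hasDerivAt s hs))
      fun s hs => by
        have hs0 : 0 ≤ s := interior_subset hs
        nlinarith [mul_nonneg hs0 (mul_nonneg (neg_nonneg.2 (hK s hs0)) (h.nonneg hK hs0))]
  have := hmono self_mem_Ici ht ht
  simp only [zero_mul, h.apply_zero, sub_zero] at this
  linarith

theorem deriv_le_exp (h : IsJacobiSolution K m m') (hK : ∀ t ≥ (0 : ℝ), K t ≤ 0)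
    (hKint : IntegrableOn (fun t => t * K t) (Ici 0)) (ht : 0 ≤ t) :
    m' t ≤ exp (∫ s in Ici 0, -s * K s) := by
  have hKint' : IntegrableOn (fun s => -s * K s) (Ici 0) := by
    simpa only [neg_mul] using hKint.fun_neg
  have hlog : log (m' t) ≤ ∫ s in 0..t, -s * K s := by
    have := intervalIntegral.sub_le_integral_of_hasDeriv_right_of_le ht
      (fun s hs => ((h.hasDerivAt' s hs.1).log (h.deriv_pos hK hs.1).ne').continuousAt
        |>.continuousWithinAt)
      (fun s hs => ((h.hasDerivAt' s hs.1.le).log (h.deriv_pos hK hs.1.le).ne').hasDerivWithinAt)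
      (hKint'.mono_set Icc_subset_Ici_self)
      fun s hs => by
        have hs0 : 0 ≤ s := hs.1.le
        rw [div_le_iff₀ (h.deriv_pos hK hs0)]
        nlinarith [mul_le_mul_of_nonpos_left (h.le_mul_deriv hK hs0) (hK s hs0)]
    rwa [h.apply_zero', log_one, sub_zero] at this
  have htail : ∫ s in 0..t, -s * K s ≤ ∫ s in Ici 0, -s * K s := by
    rw [intervalIntegral.integral_of_le ht]
    refine setIntegral_mono_set hKint' ?_ (Ioc_subset_Ioi_self.trans Ioi_subset_Ici_self).eventuallyLE
    filter_upwards [ae_restrict_mem measurableSet_Ici] with s hs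
    exact mul_nonneg_of_nonpos_of_nonpos (neg_nonpos.2 hs) (hK s hs)
  calc m' t = exp (log (m' t)) := (exp_log (h.deriv_pos hK ht)).symm
    _ ≤ exp (∫ s in Ici 0, -s * K s) := exp_le_exp.2 (hlog.trans htail)

theorem exists_tendsto_deriv (h : IsJacobiSolution K m m') (hK : ∀ t ≥ (0 : ℝ), K t ≤ 0)
    (hKint : IntegrableOn (fun t => t * K t) (Ici 0)) :
    ∃ L, Tendsto m' atTop (𝓝 L) ∧ L ≤ exp (∫ s in Ici 0, -s * K s) :=
  (h.monotoneOn_deriv hK).exists_tendsto_atTop_le fun _ ht => h.deriv_le_exp hK hKint ht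

theorem integral_mul_eq (h : IsJacobiSolution K m m') (hK : ∀ t ≥ (0 : ℝ), K t ≤ 0) {L : ℝ}
    (hL : Tendsto m' atTop (𝓝 L)) : ∫ t in Ici 0, K t * m t = 1 - L := by
  have := integral_Ioi_of_hasDerivAt_of_nonneg' h.hasDerivAt'
    (fun t ht => neg_nonneg.2 <| mul_nonpos_of_nonpos_of_nonneg (hK t (le_of_lt ht))
      (h.nonneg hK (le_of_lt ht))) hL
  rw [integral_Ici_eq_integral_Ioi, ← neg_neg (∫ t in Ioi 0, K t * m t), ← integral_neg, this,
    h.apply_zero']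
  ring

end IsJacobiSolution

theorem model_total_curvature_general (K m : ℝ → ℝ)
    (hKnonpos : ∀ t ≥ (0:ℝ), K t ≤ 0)
    (hKint : IntegrableOn (fun t => t * K t) (Set.Ici 0))
    (hODE : ∀ t ≥ (0:ℝ), HasDerivAt (deriv m) (-(K t * m t)) t)
    (hm0 : m 0 = 0) (hm'0 : deriv m 0 = 1)
    (hm' : ∀ t ≥ (0:ℝ), HasDerivAt m (deriv m t) t) :
    ∃ L : ℝ, Tendsto (deriv m) atTop (nhds L) ∧
      (2 * π) * ∫ t in Set.Ici (0:ℝ), K t * m t = 2 * π * (1 - L) ∧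
      2 * π - (2 * π) * ∫ t in Set.Ici (0:ℝ), K t * m t = 2 * π * L ∧
      2 * π * L ≤ 2 * π * Real.exp (∫ t in Set.Ici (0:ℝ), -t * K t) := by
  have h : IsJacobiSolution K m (deriv m) := ⟨hm', hODE, hm0, hm'0⟩
  obtain ⟨L, hL, hL_le⟩ := h.exists_tendsto_deriv hKnonpos hKint
  have hc := h.integral_mul_eq hKnonpos hL
  refine ⟨L, hL, by rw [hc], by rw [hc]; ring, by gcongr⟩

/-- For the model surface of revolution `M*` with warping function `m`
solving `m'' + K m = 0`, `m(0)=0`, `m'(0)=1` (`K ≤ 0` continuous with finite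
`∫₀^∞ t K(t) dt`), the total curvature `c(M*) = 2π ∫₀^∞ K(t) m(t) dt` satisfies
`c(M*) = 2π (1 - lim_{t→∞} m'(t))`, hence
`2π - c(M*) = 2π lim m' ≤ 2π exp(∫₀^∞ (-t K(t)) dt)`. -/
theorem model_total_curvature (K m : ℝ → ℝ)
    (hKcont : ContinuousOn K (Set.Ici 0))
    (hKnonpos : ∀ t ≥ (0:ℝ), K t ≤ 0)
    (hKint : IntegrableOn (fun t => t * K t) (Set.Ici 0))
    (hODE : ∀ t ≥ (0:ℝ), HasDerivAt (deriv m) (-(K t * m t)) t)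
    (hm0 : m 0 = 0) (hm'0 : deriv m 0 = 1)
    (hm' : ∀ t ≥ (0:ℝ), HasDerivAt m (deriv m t) t) :
    ∃ L : ℝ, Tendsto (deriv m) atTop (nhds L) ∧
      (2 * π) * ∫ t in Set.Ici (0:ℝ), K t * m t = 2 * π * (1 - L) ∧
      2 * π - (2 * π) * ∫ t in Set.Ici (0:ℝ), K t * m t = 2 * π * L ∧
      2 * π * L ≤ 2 * π * Real.exp (∫ t in Set.Ici (0:ℝ), -t * K t) :=
  model_total_curvature_general K m hKnonpos hKint hODE hm0 hm'0 hm'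
end
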